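/- Let λ: ℝ → (0,∞) satisfy the admissibility condition. For any integer M ≥ 0 and any t ∈ [0,1] there exists a constant C_{Mt} > 0 such that for every a ∈ S^m_σ(λ), the function a_t(q,p,q') := a(tq+(1−t)q', p) belongs to the bisymbol class BS^m_σ(λ;t) and satisfies |a_t|_{λ:M,m,σ,t} ≤ C_{Mt} |a|_{λ:M,m,σ}. -/

import Mathlib

open MeasureTheory Real
open scoped BigOperators Classical

noncomputable section

/-- Points of `ℝⁿ`. The coordinate `q 0` plays the role of the radial variable `r`,
the remaining coordinates are the angular variables `θ`. -/
abbrev Vec (n : ℕ) := Fin n → ℝ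

/-- Complex-valued partial derivative in the coordinate direction `i`. -/
def pdC {n : ℕ} (i : Fin n) (f : Vec n → ℂ) : Vec n → ℂ :=
  fun x => fderiv ℝ f x (Pi.single i 1)

/-- Iterated (multiindex) partial derivative `∂^A f`. -/
def mpd {n : ℕ} (A : Fin n → ℕ) (f : Vec n → ℂ) : Vec n → ℂ :=
  (List.finRange n).foldr (fun i g => (pdC i)^[A i] g) f

/-- Real-valued partial derivative in the coordinate direction `i`. -/
def pdR {n : ℕ} (i : Fin n) (f : Vec n → ℝ) : Vec n → ℝ :=
  fun x => fderiv ℝ f x (Pi.single i 1)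

/-- Iterated (multiindex) partial derivative, real valued. -/
def mpdR {n : ℕ} (A : Fin n → ℕ) (f : Vec n → ℝ) : Vec n → ℝ :=
  (List.finRange n).foldr (fun i g => (pdR i)^[A i] g) f

/-- Total length `|A| = α₀ + |α|` of a multiindex. -/
def fullLen {n : ℕ} (A : Fin n → ℕ) : ℕ := ∑ i, A i

/-- Angular length `|α|` of a multiindex `A = (α₀, α)`. -/
def angLen {n : ℕ} [NeZero n] (A : Fin n → ℕ) : ℕ := ∑ i, if i = 0 then 0 else A i

/-- The weighted Japanese bracket `⟨ρ ⊕ μ⁻¹ η⟩ = (1 + ρ² + μ⁻²|η|²)^(1/2)`,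
where `ρ = p 0` and `η` are the remaining coordinates of `p`. -/
def jbr {n : ℕ} [NeZero n] (μ : ℝ) (p : Vec n) : ℝ :=
  Real.sqrt (1 + ∑ i, (if i = 0 then p i else μ⁻¹ * p i) ^ 2)

/-- Derivative `∂_q^A` of a function `a(q, p)` in the first slot. -/
def dqS {n : ℕ} (A : Fin n → ℕ) (a : Vec n → Vec n → ℂ) : Vec n → Vec n → ℂ :=
  fun q p => mpd A (fun x => a x p) q

/-- Derivative `∂_p^B` of a function `a(q, p)` in the second slot. -/
def dpS {n : ℕ} (B : Fin n → ℕ) (a : Vec n → Vec n → ℂ) : Vec n → Vec n → ℂ :=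
  fun q p => mpd B (fun x => a q x) p

/-- Derivative `∂_q^A` of a function `a(q, p, q')` in the first slot. -/
def d1B {n : ℕ} (A : Fin n → ℕ) (a : Vec n → Vec n → Vec n → ℂ) :
    Vec n → Vec n → Vec n → ℂ :=
  fun q p q' => mpd A (fun x => a x p q') q

/-- Derivative `∂_p^B` of a function `a(q, p, q')` in the second slot. -/
def d2B {n : ℕ} (B : Fin n → ℕ) (a : Vec n → Vec n → Vec n → ℂ) :
    Vec n → Vec n → Vec n → ℂ :=
  fun q p q' => mpd B (fun x => a q x q') p

/-- Derivative `∂_{q'}^{A'}` of a function `a(q, p, q')` in the third slot. -/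
def d3B {n : ℕ} (A' : Fin n → ℕ) (a : Vec n → Vec n → Vec n → ℂ) :
    Vec n → Vec n → Vec n → ℂ :=
  fun q p q' => mpd A' (fun x => a q p x) q'

/-- The admissibility condition for the weight `λ : ℝ → (0,∞)`:
`λ` is positive and `C₀⁻¹ ≤ λ(r)/λ(r') ≤ C₀` whenever `|r - r'| ≤ 1`. -/
def Admissible (lam : ℝ → ℝ) : Prop :=
  (∀ r, 0 < lam r) ∧
  ∃ C > 0, ∀ r r' : ℝ, |r - r'| ≤ 1 → C⁻¹ ≤ lam r / lam r' ∧ lam r / lam r' ≤ C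

/-- The symbol class `S^m_σ(λ)`:  `a` is smooth on `ℝ^{2n}` and for all multiindices
`A = (α₀, α)`, `B = (β₀, β)`,
`|(λ(r)⁻¹∂_θ)^α (λ(r)∂_η)^β ∂_r^{α₀} ∂_ρ^{β₀} a(q,p)| ≤ C ⟨ρ ⊕ λ(r)⁻¹η⟩^{m - σ|B|}`.
(The weights `λ(r)^{±1}` commute with the `θ`- and `η`-derivatives, so the weighted
derivative equals `λ(r)^{|β| - |α|}` times the plain mixed partial derivative.) -/
def IsSymbol {n : ℕ} [NeZero n] (lam : ℝ → ℝ) (m σ : ℝ) (a : Vec n → Vec n → ℂ) : Prop :=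
  ContDiff ℝ (⊤ : ℕ∞) (fun x : Vec n × Vec n => a x.1 x.2) ∧
  ∀ A B : Fin n → ℕ, ∃ C > 0, ∀ q p : Vec n,
    lam (q 0) ^ ((angLen B : ℤ) - (angLen A : ℤ)) * ‖dqS A (dpS B a) q p‖
      ≤ C * jbr (lam (q 0)) p ^ (m - σ * (fullLen B : ℝ))

/-- The seminorm `|a|_{λ : M, m, σ}` on the symbol class `S^m_σ(λ)`. -/
def symSeminorm {n : ℕ} [NeZero n] (lam : ℝ → ℝ) (M : ℕ) (m σ : ℝ)
    (a : Vec n → Vec n → ℂ) : ℝ :=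
  ∑ A : Fin n → Fin (M + 1), ∑ B : Fin n → Fin (M + 1),
    if fullLen (fun i => (A i : ℕ)) + fullLen (fun i => (B i : ℕ)) ≤ M then
      ⨆ q : Vec n, ⨆ p : Vec n,
        jbr (lam (q 0)) p ^ (-m + σ * (fullLen (fun i => (B i : ℕ)) : ℝ)) *
          (lam (q 0) ^ ((angLen (fun i => (B i : ℕ)) : ℤ) - (angLen (fun i => (A i : ℕ)) : ℤ)) *
            ‖dqS (fun i => (A i : ℕ)) (dpS (fun i => (B i : ℕ)) a) q p‖)
    else 0

/-- `λ^t_{jk} := λ(tj + (1-t)k)`. -/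
def lamT (lam : ℝ → ℝ) (t : ℝ) (j k : ℤ) : ℝ := lam (t * j + (1 - t) * k)

/-- The bisymbol class `BS^m_σ(λ; t)`. -/
def IsBisymbol {n : ℕ} [NeZero n] (lam : ℝ → ℝ) (m σ t : ℝ)
    (a : Vec n → Vec n → Vec n → ℂ) : Prop :=
  ContDiff ℝ (⊤ : ℕ∞) (fun x : Vec n × Vec n × Vec n => a x.1 x.2.1 x.2.2) ∧
  ∀ A B A' : Fin n → ℕ, ∃ C > 0, ∀ (j k : ℤ) (q p q' : Vec n),
    |q 0 - (j : ℝ)| ≤ 1 → |q' 0 - (k : ℝ)| ≤ 1 →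
    lamT lam t j k ^ ((angLen B : ℤ) - (angLen A : ℤ) - (angLen A' : ℤ)) *
        ‖d1B A (d2B B (d3B A' a)) q p q'‖
      ≤ C * jbr (lamT lam t j k) p ^ (m - σ * (fullLen B : ℝ))

/-- The seminorm `|a|_{λ : M, m, σ, t}` on `BS^m_σ(λ; t)`. -/
def bisymSeminorm {n : ℕ} [NeZero n] (lam : ℝ → ℝ) (M : ℕ) (m σ t : ℝ)
    (a : Vec n → Vec n → Vec n → ℂ) : ℝ :=
  ∑ A : Fin n → Fin (M + 1), ∑ B : Fin n → Fin (M + 1), ∑ A' : Fin n → Fin (M + 1),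
    if fullLen (fun i => (A i : ℕ)) + fullLen (fun i => (B i : ℕ))
        + fullLen (fun i => (A' i : ℕ)) ≤ M then
      ⨆ j : ℤ, ⨆ k : ℤ, ⨆ q : Vec n, ⨆ p : Vec n, ⨆ q' : Vec n,
        if |q 0 - (j : ℝ)| ≤ 1 ∧ |q' 0 - (k : ℝ)| ≤ 1 then
          jbr (lamT lam t j k) p ^ (-m + σ * (fullLen (fun i => (B i : ℕ)) : ℝ)) *
            (lamT lam t j k ^ ((angLen (fun i => (B i : ℕ)) : ℤ)
                - (angLen (fun i => (A i : ℕ)) : ℤ) - (angLen (fun i => (A' i : ℕ)) : ℤ)) *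
              ‖d1B (fun i => (A i : ℕ)) (d2B (fun i => (B i : ℕ))
                  (d3B (fun i => (A' i : ℕ)) a)) q p q'‖)
        else 0
    else 0

/-- The plain bisymbol class `BS^m_σ(1)` (the case `λ ≡ 1`). -/
def IsBisymbolOne {n : ℕ} [NeZero n] (m σ : ℝ) (a : Vec n → Vec n → Vec n → ℂ) : Prop :=
  ContDiff ℝ (⊤ : ℕ∞) (fun x : Vec n × Vec n × Vec n => a x.1 x.2.1 x.2.2) ∧
  ∀ A B A' : Fin n → ℕ, ∃ C > 0, ∀ q p q' : Vec n,
    ‖d1B A (d2B B (d3B A' a)) q p q'‖ ≤ C * jbr 1 p ^ (m - σ * (fullLen B : ℝ))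

/-- The seminorm `|a|_{M, m, σ}` on `BS^m_σ(1)`. -/
def bisymSeminormOne {n : ℕ} [NeZero n] (M : ℕ) (m σ : ℝ)
    (a : Vec n → Vec n → Vec n → ℂ) : ℝ :=
  ∑ A : Fin n → Fin (M + 1), ∑ B : Fin n → Fin (M + 1), ∑ A' : Fin n → Fin (M + 1),
    if fullLen (fun i => (A i : ℕ)) + fullLen (fun i => (B i : ℕ))
        + fullLen (fun i => (A' i : ℕ)) ≤ M then
      ⨆ q : Vec n, ⨆ p : Vec n, ⨆ q' : Vec n,
        jbr 1 p ^ (-m + σ * (fullLen (fun i => (B i : ℕ)) : ℝ)) *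
          ‖d1B (fun i => (A i : ℕ)) (d2B (fun i => (B i : ℕ))
              (d3B (fun i => (A' i : ℕ)) a)) q p q'‖
    else 0

/-- The oscillatory phase `e^{i p · (q - q')}`. -/
def phase {n : ℕ} (p q q' : Vec n) : ℂ :=
  Complex.exp (Complex.I * ((∑ i, p i * (q i - q' i) : ℝ) : ℂ))

/-- The pseudodifferential operator `Op^g(a)` with bisymbol `a`, as an iterated integral:
`Op^g(a)u(q) = (2π)^{-n} g(q)^{-1/4} ∫ dp ∫ dq' a(q,p,q') e^{ip⋅(q-q')} u(q') g(q')^{1/4}`. -/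
def OpG {n : ℕ} (g : Vec n → ℝ) (a : Vec n → Vec n → Vec n → ℂ) (u : Vec n → ℂ) :
    Vec n → ℂ :=
  fun q => (((2 * Real.pi) ^ (-(n : ℤ)) : ℝ) : ℂ) * ((g q ^ (-(1 : ℝ) / 4) : ℝ) : ℂ) *
    ∫ p : Vec n, ∫ q' : Vec n,
      a q p q' * phase p q q' * u q' * ((g q' ^ ((1 : ℝ) / 4) : ℝ) : ℂ)

/-- The pseudodifferential operator `Op(a) = Op^1(a)` with bisymbol `a`. -/
def Op {n : ℕ} (a : Vec n → Vec n → Vec n → ℂ) (u : Vec n → ℂ) : Vec n → ℂ :=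
  fun q => (((2 * Real.pi) ^ (-(n : ℤ)) : ℝ) : ℂ) *
    ∫ p : Vec n, ∫ q' : Vec n, a q p q' * phase p q q' * u q'

/-- The `t`-quantization `Op^{g,t}(a)` of a symbol `a`. -/
def OpSt {n : ℕ} (g : Vec n → ℝ) (t : ℝ) (a : Vec n → Vec n → ℂ) (u : Vec n → ℂ) :
    Vec n → ℂ :=
  OpG g (fun q p q' => a (t • q + (1 - t) • q') p) u

/-- The quantization `Op(b)` of a symbol `b` (the case `t = 1`, `g ≡ 1`). -/
def OpSym {n : ℕ} (b : Vec n → Vec n → ℂ) (u : Vec n → ℂ) : Vec n → ℂ :=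
  Op (fun q p _ => b q p) u

/-- The `L²(g^{1/2}dq)` norm. -/
def L2g {n : ℕ} (g : Vec n → ℝ) (f : Vec n → ℂ) : ℝ :=
  Real.sqrt (∫ q : Vec n, ‖f q‖ ^ 2 * Real.sqrt (g q))

/-- The `L²(dq)` norm. -/
def L2 {n : ℕ} (f : Vec n → ℂ) : ℝ :=
  Real.sqrt (∫ q : Vec n, ‖f q‖ ^ 2)

end

/- ===================== Auxiliary development ===================== -/

noncomputable section Aux

namespace SymbolAux

/-- Directional derivative operator. -/
def Dd {E : Type*} [NormedAddCommGroup E] [NormedSpace ℝ E] (v : E) (f : E → ℂ) : E → ℂ :=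
  fun x => fderiv ℝ f x v

/-- Iterated directional derivatives along a list of directions. -/
def DL {E : Type*} [NormedAddCommGroup E] [NormedSpace ℝ E] (l : List E) (f : E → ℂ) : E → ℂ :=
  l.foldr Dd f

variable {E : Type*} [NormedAddCommGroup E] [NormedSpace ℝ E]

lemma Dd.contDiff {f : E → ℂ} (hf : ContDiff ℝ (⊤ : ℕ∞) f) (v : E) : ContDiff ℝ (⊤ : ℕ∞) (Dd v f) := by
  have h1 : ContDiff ℝ (⊤ : ℕ∞) (fderiv ℝ f) := hf.fderiv_right ((by simp))
  exact (ContinuousLinearMap.apply ℝ ℂ v).contDiff.comp h1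

lemma DL.contDiff {f : E → ℂ} (hf : ContDiff ℝ (⊤ : ℕ∞) f) (l : List E) : ContDiff ℝ (⊤ : ℕ∞) (DL l f) := by
  induction l with
  | nil => exact hf
  | cons v l ih => exact Dd.contDiff ih v

lemma DL_cons (v : E) (l : List E) (f : E → ℂ) : DL (v :: l) f = Dd v (DL l f) := rfl

lemma DL_append (l₁ l₂ : List E) (f : E → ℂ) : DL (l₁ ++ l₂) f = DL l₁ (DL l₂ f) :=
  List.foldr_append

lemma Dd_comm {f : E → ℂ} (hf : ContDiff ℝ (⊤ : ℕ∞) f) (v w : E) :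
    Dd v (Dd w f) = Dd w (Dd v f) := by
  funext x
  have hd : DifferentiableAt ℝ (fderiv ℝ f) x :=
    ((hf.fderiv_right (m := (⊤ : ℕ∞)) ((by simp))).differentiable (by simp)).differentiableAt
  have key : ∀ u w' : E, Dd u (Dd w' f) x = fderiv ℝ (fderiv ℝ f) x u w' := by
    intro u w'
    show fderiv ℝ (fun y => fderiv ℝ f y w') x u = _
    rw [fderiv_clm_apply hd (differentiableAt_const w')]
    simp
  have hsymm : IsSymmSndFDerivAt ℝ f x := by
    refine ContDiffAt.isSymmSndFDerivAt (n := (⊤ : ℕ∞)) hf.contDiffAt ?_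
    exact (by rw [minSmoothness_of_isRCLikeNormedField]; exact WithTop.coe_le_coe.mpr (le_top : (2 : ℕ∞) ≤ ⊤))
  rw [key v w, key w v, hsymm.eq]

lemma DL_perm {f : E → ℂ} (hf : ContDiff ℝ (⊤ : ℕ∞) f) {l l' : List E} (h : l.Perm l') :
    DL l f = DL l' f := by
  induction h with
  | nil => rfl
  | cons v _ ih => rw [DL_cons, DL_cons, ih]
  | swap v w l => rw [DL_cons, DL_cons, DL_cons, DL_cons, Dd_comm (DL.contDiff hf l)]
  | trans _ _ ih1 ih2 => rw [ih1, ih2]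

lemma Dd_smul_dir (s : ℝ) (v : E) (f : E → ℂ) : Dd (s • v) f = fun x => s • Dd v f x := by
  funext x; simp [Dd]

lemma Dd_const_smul {g : E → ℂ} (hg : ContDiff ℝ (⊤ : ℕ∞) g) (s : ℝ) (v : E) :
    Dd v (fun x => s • g x) = fun x => s • Dd v g x := by
  funext x
  show fderiv ℝ (fun x => s • g x) x v = _
  rw [fderiv_fun_const_smul (hg.differentiable (by simp)).differentiableAt s]
  simp [Dd]

/-- Chain rule for iterated directional derivatives through an affine map. -/
lemma DL_affine {E' : Type*} [NormedAddCommGroup E'] [NormedSpace ℝ E'] {f : E' → ℂ}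
    (hf : ContDiff ℝ (⊤ : ℕ∞) f) (J : E →L[ℝ] E') (c : E') (l : List E) :
    DL l (fun x => f (J x + c)) = fun x => DL (l.map J) f (J x + c) := by
  induction l with
  | nil => rfl
  | cons v l ih =>
    rw [DL_cons, ih, List.map_cons, DL_cons]
    funext x
    have hg : ContDiff ℝ (⊤ : ℕ∞) (DL (l.map J) f) := DL.contDiff hf _
    have haff : HasFDerivAt (fun x : E => J x + c) J x := (J.hasFDerivAt).add_const c
    have hcomp : HasFDerivAt (fun x : E => DL (l.map J) f (J x + c))
        ((fderiv ℝ (DL (l.map J) f) (J x + c)).comp J) x :=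
      ((hg.differentiable (by simp)).differentiableAt.hasFDerivAt).comp x haff
    show fderiv ℝ _ x v = _
    rw [hcomp.fderiv]
    rfl

lemma DL_map_smul {f : E → ℂ} (hf : ContDiff ℝ (⊤ : ℕ∞) f) (s : ℝ) (l l₂ : List E) :
    DL (l.map (fun v => s • v) ++ l₂) f = fun x => s ^ l.length • DL (l ++ l₂) f x := by
  induction l with
  | nil => simp
  | cons v l ih =>
    have hsm : ContDiff ℝ (⊤ : ℕ∞) (DL (l ++ l₂) f) := DL.contDiff hf _
    rw [List.map_cons, List.cons_append, DL_cons, ih, List.cons_append, DL_cons]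
    funext x
    have h1 : Dd (s • v) (fun x => s ^ l.length • DL (l ++ l₂) f x)
        = fun x => s • Dd v (fun x => s ^ l.length • DL (l ++ l₂) f x) x :=
      Dd_smul_dir s v _
    rw [h1]
    have h2 : Dd v (fun x => s ^ l.length • DL (l ++ l₂) f x)
        = fun x => s ^ l.length • Dd v (DL (l ++ l₂) f) x := Dd_const_smul hsm _ _
    rw [h2]
    simp [List.length_cons, pow_succ, smul_smul]
    ring_nf

lemma Dd_iterate (v : E) (k : ℕ) (f : E → ℂ) :
    (Dd v)^[k] f = DL (List.replicate k v) f := by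
  induction k with
  | zero => rfl
  | succ k ih => rw [Function.iterate_succ_apply', ih, List.replicate_succ, DL_cons]

/-- Standard basis direction. -/
def sdir {n : ℕ} (i : Fin n) : Vec n := Pi.single i 1

/-- The list of basis directions associated with a multiindex. -/
def baseList {n : ℕ} (A : Fin n → ℕ) : List (Vec n) :=
  (List.finRange n).flatMap (fun i => List.replicate (A i) (sdir i))

lemma mpd_eq_DL {n : ℕ} (A : Fin n → ℕ) (f : Vec n → ℂ) : mpd A f = DL (baseList A) f := by
  suffices h : ∀ l : List (Fin n), l.foldr (fun i g => (pdC i)^[A i] g) f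
      = DL (l.flatMap fun i => List.replicate (A i) (sdir i)) f from h _
  intro l
  induction l with
  | nil => rfl
  | cons i l ih =>
    rw [List.foldr_cons, ih, List.flatMap_cons]
    show (Dd (sdir i))^[A i] _ = _
    rw [Dd_iterate]
    exact (List.foldr_append).symm

lemma baseList_length {n : ℕ} (A : Fin n → ℕ) : (baseList A).length = fullLen A := by
  rw [baseList, List.length_flatMap, fullLen, Fin.sum_univ_def]
  congr 1
  simp

lemma baseList_add_perm {n : ℕ} (A A' : Fin n → ℕ) :
    (baseList (fun i => A i + A' i)).Perm (baseList A ++ baseList A') := by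
  rw [← Multiset.coe_eq_coe]
  suffices h : ∀ l : List (Fin n),
      ((l.flatMap fun i => List.replicate (A i + A' i) (sdir i)) : Multiset (Vec n))
      = ((l.flatMap fun i => List.replicate (A i) (sdir i)) : Multiset (Vec n))
        + ((l.flatMap fun i => List.replicate (A' i) (sdir i)) : Multiset (Vec n)) by
    have := h (List.finRange n)
    simpa [baseList] using this
  intro l
  induction l with
  | nil => rfl
  | cons i l ih =>
    simp only [List.flatMap_cons, List.replicate_add, ← Multiset.coe_add] at *
    rw [ih]
    abel

end SymbolAux

end Aux

noncomputable section Aux2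
namespace SymbolAux

variable {n : ℕ}

/-- Uncurried 2-slot function. -/
def unc2 {n : ℕ} (a : Vec n → Vec n → ℂ) : Vec n × Vec n → ℂ := fun x => a x.1 x.2

/-- Uncurried 3-slot function. -/
def unc3 {n : ℕ} (b : Vec n → Vec n → Vec n → ℂ) : Vec n × Vec n × Vec n → ℂ :=
  fun x => b x.1 x.2.1 x.2.2

def jl2 (n : ℕ) : Vec n →L[ℝ] Vec n × Vec n := ContinuousLinearMap.inl ℝ _ _
def jr2 (n : ℕ) : Vec n →L[ℝ] Vec n × Vec n := ContinuousLinearMap.inr ℝ _ _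
def j1 (n : ℕ) : Vec n →L[ℝ] Vec n × Vec n × Vec n := ContinuousLinearMap.inl ℝ _ _
def j2 (n : ℕ) : Vec n →L[ℝ] Vec n × Vec n × Vec n :=
  (ContinuousLinearMap.inr ℝ (Vec n) (Vec n × Vec n)).comp
    (ContinuousLinearMap.inl ℝ (Vec n) (Vec n))
def j3 (n : ℕ) : Vec n →L[ℝ] Vec n × Vec n × Vec n :=
  (ContinuousLinearMap.inr ℝ (Vec n) (Vec n × Vec n)).comp
    (ContinuousLinearMap.inr ℝ (Vec n) (Vec n))

/-- The substitution map `(q,p,q') ↦ (t q + (1-t) q', p)`. -/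
def Tt (n : ℕ) (t : ℝ) : (Vec n × Vec n × Vec n) →L[ℝ] Vec n × Vec n :=
  (t • ContinuousLinearMap.fst ℝ (Vec n) (Vec n × Vec n)
    + (1 - t) • ((ContinuousLinearMap.snd ℝ (Vec n) (Vec n)).comp
        (ContinuousLinearMap.snd ℝ (Vec n) (Vec n × Vec n)))).prod
  ((ContinuousLinearMap.fst ℝ (Vec n) (Vec n)).comp
    (ContinuousLinearMap.snd ℝ (Vec n) (Vec n × Vec n)))

lemma mpd_slot {E : Type*} [NormedAddCommGroup E] [NormedSpace ℝ E]
    {G : E → ℂ} (hG : ContDiff ℝ (⊤ : ℕ∞) G) (J : Vec n →L[ℝ] E) (c : E) (A : Fin n → ℕ) :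
    mpd A (fun x => G (J x + c)) = fun x => DL ((baseList A).map J) G (J x + c) := by
  rw [mpd_eq_DL]; exact DL_affine hG J c _

lemma dpS_eq (a : Vec n → Vec n → ℂ) (hF : ContDiff ℝ (⊤ : ℕ∞) (unc2 a)) (B : Fin n → ℕ)
    (q p : Vec n) :
    dpS B a q p = DL ((baseList B).map (jr2 n)) (unc2 a) (q, p) := by
  show mpd B (fun y => a q y) p = _
  have e1 : (fun y => a q y) = fun y => (unc2 a) (jr2 n y + ((q, 0) : Vec n × Vec n)) := by
    funext y
    have : jr2 n y + ((q, 0) : Vec n × Vec n) = (q, y) := by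
      simp [jr2, Prod.ext_iff]
    rw [this]; rfl
  rw [e1, mpd_slot hF (jr2 n) (q, 0) B]
  beta_reduce
  have : jr2 n p + ((q, 0) : Vec n × Vec n) = (q, p) := by simp [jr2, Prod.ext_iff]
  rw [this]

lemma dqS_dpS_eq (a : Vec n → Vec n → ℂ) (hF : ContDiff ℝ (⊤ : ℕ∞) (unc2 a)) (A B : Fin n → ℕ)
    (q p : Vec n) :
    dqS A (dpS B a) q p
      = DL ((baseList A).map (jl2 n) ++ (baseList B).map (jr2 n)) (unc2 a) (q, p) := by
  show mpd A (fun x => dpS B a x p) q = _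
  have hGsm : ContDiff ℝ (⊤ : ℕ∞) (DL ((baseList B).map (jr2 n)) (unc2 a)) := DL.contDiff hF _
  have e1 : (fun x => dpS B a x p)
      = fun x => (DL ((baseList B).map (jr2 n)) (unc2 a)) (jl2 n x + ((0, p) : Vec n × Vec n)) := by
    funext x
    rw [dpS_eq a hF B x p]
    have : jl2 n x + ((0, p) : Vec n × Vec n) = (x, p) := by simp [jl2, Prod.ext_iff]
    rw [this]
  rw [e1, mpd_slot hGsm (jl2 n) (0, p) A, DL_append]
  beta_reduce
  have : jl2 n q + ((0, p) : Vec n × Vec n) = (q, p) := by simp [jl2, Prod.ext_iff]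
  rw [this]

lemma d1_d2_d3_eq (b : Vec n → Vec n → Vec n → ℂ) (hH : ContDiff ℝ (⊤ : ℕ∞) (unc3 b))
    (A B A' : Fin n → ℕ) (q p q' : Vec n) :
    d1B A (d2B B (d3B A' b)) q p q'
      = DL ((baseList A).map (j1 n)
          ++ ((baseList B).map (j2 n) ++ (baseList A').map (j3 n))) (unc3 b) (q, p, q') := by
  have h3 : ∀ q p q' : Vec n,
      d3B A' b q p q' = DL ((baseList A').map (j3 n)) (unc3 b) (q, p, q') := by
    intro q p q'
    show mpd A' (fun x => b q p x) q' = _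
    have e1 : (fun x => b q p x)
        = fun x => (unc3 b) (j3 n x + ((q, p, 0) : Vec n × Vec n × Vec n)) := by
      funext x
      have : j3 n x + ((q, p, 0) : Vec n × Vec n × Vec n) = (q, p, x) := by
        simp [j3, Prod.ext_iff]
      rw [this]; rfl
    rw [e1, mpd_slot hH (j3 n) _ A']
    beta_reduce
    have : j3 n q' + ((q, p, 0) : Vec n × Vec n × Vec n) = (q, p, q') := by
      simp [j3, Prod.ext_iff]
    rw [this]
  have hK : ContDiff ℝ (⊤ : ℕ∞) (DL ((baseList A').map (j3 n)) (unc3 b)) := DL.contDiff hH _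
  have h2 : ∀ q p q' : Vec n, d2B B (d3B A' b) q p q'
      = DL ((baseList B).map (j2 n) ++ (baseList A').map (j3 n)) (unc3 b) (q, p, q') := by
    intro q p q'
    show mpd B (fun y => d3B A' b q y q') p = _
    have e1 : (fun y => d3B A' b q y q')
        = fun y => (DL ((baseList A').map (j3 n)) (unc3 b))
            (j2 n y + ((q, 0, q') : Vec n × Vec n × Vec n)) := by
      funext y
      rw [h3 q y q']
      have : j2 n y + ((q, 0, q') : Vec n × Vec n × Vec n) = (q, y, q') := by
        simp [j2, Prod.ext_iff]
      rw [this]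
    rw [e1, mpd_slot hK (j2 n) _ B, DL_append]
    beta_reduce
    have : j2 n p + ((q, 0, q') : Vec n × Vec n × Vec n) = (q, p, q') := by
      simp [j2, Prod.ext_iff]
    rw [this]
  have hK2 : ContDiff ℝ (⊤ : ℕ∞)
      (DL ((baseList B).map (j2 n) ++ (baseList A').map (j3 n)) (unc3 b)) := DL.contDiff hH _
  show mpd A (fun x => d2B B (d3B A' b) x p q') q = _
  have e1 : (fun x => d2B B (d3B A' b) x p q')
      = fun x => (DL ((baseList B).map (j2 n) ++ (baseList A').map (j3 n)) (unc3 b))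
          (j1 n x + ((0, p, q') : Vec n × Vec n × Vec n)) := by
    funext x
    rw [h2 x p q']
    have : j1 n x + ((0, p, q') : Vec n × Vec n × Vec n) = (x, p, q') := by
      simp [j1, Prod.ext_iff]
    rw [this]
  rw [e1, mpd_slot hK2 (j1 n) _ A, DL_append]
  beta_reduce
  have : j1 n q + ((0, p, q') : Vec n × Vec n × Vec n) = (q, p, q') := by
    simp [j1, Prod.ext_iff]
  rw [this, DL_append, DL_append]

lemma unc3_subst (a : Vec n → Vec n → ℂ) (t : ℝ) :
    unc3 (fun q p q' => a (t • q + (1 - t) • q') p) = fun x => unc2 a (Tt n t x) := rfl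

end SymbolAux
end Aux2

noncomputable section Aux3
namespace SymbolAux

variable {n : ℕ}

lemma coe_append_multiset {X : Type*} (l₁ l₂ : List X) :
    ((l₁ ++ l₂ : List X) : Multiset X) = (l₁ : Multiset X) + (l₂ : Multiset X) := by
  simp

/-- The key identity: iterated derivatives of `a_t` reduce to derivatives of `a`. -/
lemma key_identity (a : Vec n → Vec n → ℂ) (hF : ContDiff ℝ (⊤ : ℕ∞) (unc2 a)) (t : ℝ)
    (A B A' : Fin n → ℕ) (q p q' : Vec n) :
    d1B A (d2B B (d3B A' (fun q p q' => a (t • q + (1 - t) • q') p))) q p q'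
      = (t ^ fullLen A * (1 - t) ^ fullLen A') •
          dqS (fun i => A i + A' i) (dpS B a) (t • q + (1 - t) • q') p := by
  have hH : ContDiff ℝ (⊤ : ℕ∞) (unc3 (fun q p q' => a (t • q + (1 - t) • q') p)) := by
    rw [unc3_subst]; exact hF.comp (Tt n t).contDiff
  rw [d1_d2_d3_eq _ hH A B A' q p q', unc3_subst]
  have hc0 : (fun x => unc2 a (Tt n t x)) = fun x => unc2 a (Tt n t x + 0) := by
    funext x; rw [add_zero]
  rw [hc0, DL_affine hF (Tt n t) 0 _]
  beta_reduce
  rw [add_zero]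
  -- compute the mapped list
  have c1 : ∀ v : Vec n, Tt n t (j1 n v) = t • (jl2 n v) := by
    intro v; simp [Tt, j1, jl2, Prod.ext_iff]
  have c2 : ∀ v : Vec n, Tt n t (j2 n v) = jr2 n v := by
    intro v; simp [Tt, j2, jr2, Prod.ext_iff]
  have c3 : ∀ v : Vec n, Tt n t (j3 n v) = (1 - t) • (jl2 n v) := by
    intro v; simp [Tt, j3, jl2, Prod.ext_iff]
  have hmap : (((baseList A).map (j1 n)
        ++ ((baseList B).map (j2 n) ++ (baseList A').map (j3 n))).map (Tt n t))
      = ((baseList A).map (jl2 n)).map (fun v => t • v)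
        ++ (((baseList B).map (jr2 n))
            ++ ((baseList A').map (jl2 n)).map (fun v => (1 - t) • v)) := by
    simp only [List.map_append, List.map_map]
    congr 1
    · exact List.map_congr_left (fun v _ => by simpa using c1 v)
    congr 1
    · exact List.map_congr_left (fun v _ => by simpa using c2 v)
    · exact List.map_congr_left (fun v _ => by simpa using c3 v)
  rw [hmap]
  set LA := (baseList A).map (jl2 n) with hLA
  set LB := (baseList B).map (jr2 n) with hLB
  set LA' := (baseList A').map (jl2 n) with hLA'
  have p1 : (LA.map (fun v => t • v) ++ (LB ++ LA'.map (fun v => (1 - t) • v))).Perm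
      (LA.map (fun v => t • v) ++ (LA'.map (fun v => (1 - t) • v) ++ LB)) :=
    List.Perm.append_left _ (List.perm_append_comm)
  rw [DL_perm hF p1, DL_map_smul hF t LA _]
  beta_reduce
  have p2 : (LA ++ (LA'.map (fun v => (1 - t) • v) ++ LB)).Perm
      (LA'.map (fun v => (1 - t) • v) ++ (LA ++ LB)) := by
    rw [← Multiset.coe_eq_coe]
    simp only [coe_append_multiset]
    abel
  rw [DL_perm hF p2, DL_map_smul hF (1 - t) LA' (LA ++ LB)]
  beta_reduce
  have p3 : (LA' ++ (LA ++ LB)).Perm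
      ((baseList (fun i => A i + A' i)).map (jl2 n) ++ LB) := by
    have hb : ((baseList (fun i => A i + A' i)).map (jl2 n)).Perm (LA ++ LA') := by
      have h := (baseList_add_perm A A').map (jl2 n)
      rw [List.map_append] at h
      exact h
    rw [← Multiset.coe_eq_coe] at hb ⊢
    simp only [coe_append_multiset] at hb ⊢
    rw [hb]
    abel
  rw [DL_perm hF p3]
  have harg : Tt n t (q, p, q') = ((t • q + (1 - t) • q', p) : Vec n × Vec n) := rfl
  rw [harg, ← dqS_dpS_eq a hF _ B]
  rw [List.length_map, List.length_map, baseList_length, baseList_length, smul_smul]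

end SymbolAux
end Aux3

noncomputable section Aux4
namespace SymbolAux

lemma jbr_nonneg {n : ℕ} [NeZero n] (μ : ℝ) (p : Vec n) : 0 ≤ jbr μ p :=
  Real.sqrt_nonneg _

lemma one_le_jbr {n : ℕ} [NeZero n] (μ : ℝ) (p : Vec n) : 1 ≤ jbr μ p := by
  rw [jbr]
  have h : (1 : ℝ) ≤ 1 + ∑ i, (if i = 0 then p i else μ⁻¹ * p i) ^ 2 := by
    have h2 : (0:ℝ) ≤ ∑ i, (if i = 0 then p i else μ⁻¹ * p i) ^ 2 :=
      Finset.sum_nonneg (fun i _ => sq_nonneg _)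
    linarith
  calc (1 : ℝ) = Real.sqrt 1 := Real.sqrt_one.symm
  _ ≤ _ := Real.sqrt_le_sqrt h

lemma jbr_pos {n : ℕ} [NeZero n] (μ : ℝ) (p : Vec n) : 0 < jbr μ p :=
  lt_of_lt_of_le one_pos (one_le_jbr μ p)

lemma jbr_le {n : ℕ} [NeZero n] {μ μ' K : ℝ} (hμ : 0 < μ) (hμ' : 0 < μ') (hK : 1 ≤ K)
    (h : μ ≤ K * μ') (p : Vec n) : jbr μ' p ≤ K * jbr μ p := by
  rw [jbr, jbr]
  have hKx : K * Real.sqrt (1 + ∑ i, (if i = 0 then p i else μ⁻¹ * p i) ^ 2)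
      = Real.sqrt (K ^ 2 * (1 + ∑ i, (if i = 0 then p i else μ⁻¹ * p i) ^ 2)) := by
    rw [Real.sqrt_mul (sq_nonneg K), Real.sqrt_sq (by linarith)]
  rw [hKx]
  apply Real.sqrt_le_sqrt
  have hu : μ'⁻¹ ≤ K * μ⁻¹ := by
    have e1 : K * μ⁻¹ = K / μ := (div_eq_mul_inv K μ).symm
    have e2 : μ'⁻¹ = 1 / μ' := (one_div μ').symm
    rw [e1, e2, div_le_div_iff₀ hμ' hμ]
    nlinarith
  have hterm : ∀ i : Fin n, (if i = 0 then p i else μ'⁻¹ * p i) ^ 2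
      ≤ K ^ 2 * (if i = 0 then p i else μ⁻¹ * p i) ^ 2 := by
    intro i
    by_cases hi : i = 0
    · subst hi
      rw [if_pos rfl, if_pos rfl]
      have hK2 : 1 ≤ K ^ 2 := by nlinarith
      nlinarith [sq_nonneg (p (0 : Fin n))]
    · simp only [if_neg hi]
      have hsq : μ'⁻¹ ^ 2 ≤ (K * μ⁻¹) ^ 2 :=
        pow_le_pow_left₀ (inv_nonneg.mpr hμ'.le) hu 2
      calc (μ'⁻¹ * p i) ^ 2 = μ'⁻¹ ^ 2 * (p i) ^ 2 := by ring
      _ ≤ (K * μ⁻¹) ^ 2 * (p i) ^ 2 := mul_le_mul_of_nonneg_right hsq (sq_nonneg _)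
      _ = K ^ 2 * (μ⁻¹ * p i) ^ 2 := by ring
  have hsum := Finset.sum_le_sum (fun i (_ : i ∈ Finset.univ) => hterm i)
  rw [mul_add]
  have h1 : (1 : ℝ) ≤ K ^ 2 * 1 := by nlinarith
  calc 1 + ∑ i, (if i = 0 then p i else μ'⁻¹ * p i) ^ 2
      ≤ K ^ 2 * 1 + ∑ i, K ^ 2 * (if i = 0 then p i else μ⁻¹ * p i) ^ 2 :=
        add_le_add h1 hsum
  _ = K ^ 2 * 1 + K ^ 2 * ∑ i, (if i = 0 then p i else μ⁻¹ * p i) ^ 2 := by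
        rw [Finset.mul_sum]
  _ = K ^ 2 * 1 + K ^ 2 * ∑ i, (if i = 0 then p i else μ⁻¹ * p i) ^ 2 := rfl

lemma rpow_ratio {K x y : ℝ} (hK : 1 ≤ K) (hx : 0 < x) (hy : 0 < y)
    (hxy : x ≤ K * y) (hyx : y ≤ K * x) (e : ℝ) : x ^ e ≤ K ^ |e| * y ^ e := by
  have hK0 : 0 < K := lt_of_lt_of_le one_pos hK
  rcases le_or_gt 0 e with he | he
  · rw [abs_of_nonneg he]
    calc x ^ e ≤ (K * y) ^ e := Real.rpow_le_rpow hx.le hxy he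
    _ = K ^ e * y ^ e := Real.mul_rpow hK0.le hy.le
  · rw [abs_of_neg he]
    have h1 : y / K ≤ x := by
      rw [div_le_iff₀ hK0]; nlinarith
    calc x ^ e ≤ (y / K) ^ e :=
        Real.rpow_le_rpow_of_nonpos (by positivity) h1 he.le
    _ = y ^ e / K ^ e := Real.div_rpow hy.le hK0.le e
    _ = K ^ (-e) * y ^ e := by
        rw [Real.rpow_neg hK0.le, div_eq_mul_inv, mul_comm]

lemma zpow_ratio {K x y : ℝ} (hK : 1 ≤ K) (hx : 0 < x) (hy : 0 < y)
    (hxy : x ≤ K * y) (hyx : y ≤ K * x) (E : ℤ) :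
    x ^ E ≤ K ^ |(E : ℝ)| * y ^ E := by
  have := rpow_ratio hK hx hy hxy hyx (E : ℝ)
  rwa [Real.rpow_intCast, Real.rpow_intCast] at this

lemma angLen_le_fullLen {n : ℕ} [NeZero n] (A : Fin n → ℕ) : angLen A ≤ fullLen A := by
  apply Finset.sum_le_sum
  intro i _
  split <;> omega

lemma angLen_add {n : ℕ} [NeZero n] (A A' : Fin n → ℕ) :
    angLen (fun i => A i + A' i) = angLen A + angLen A' := by
  rw [angLen, angLen, angLen, ← Finset.sum_add_distrib]
  apply Finset.sum_congr rfl
  intro i _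
  split <;> omega

lemma fullLen_add {n : ℕ} (A A' : Fin n → ℕ) :
    fullLen (fun i => A i + A' i) = fullLen A + fullLen A' := by
  rw [fullLen, fullLen, fullLen, ← Finset.sum_add_distrib]

lemma comp_le_fullLen {n : ℕ} (A : Fin n → ℕ) (i : Fin n) : A i ≤ fullLen A :=
  Finset.single_le_sum (fun _ _ => Nat.zero_le _) (Finset.mem_univ i)

end SymbolAux
end Aux4

noncomputable section Aux5
namespace SymbolAux

lemma norm_d1d2d3_le {n : ℕ} (a : Vec n → Vec n → ℂ) (hF : ContDiff ℝ (⊤ : ℕ∞) (unc2 a))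
    {t : ℝ} (ht0 : 0 ≤ t) (ht1 : t ≤ 1) (A B A' : Fin n → ℕ) (q p q' : Vec n) :
    ‖d1B A (d2B B (d3B A' (fun q p q' => a (t • q + (1 - t) • q') p))) q p q'‖
      ≤ ‖dqS (fun i => A i + A' i) (dpS B a) (t • q + (1 - t) • q') p‖ := by
  rw [key_identity a hF t A B A' q p q', norm_smul]
  have h1 : t ^ fullLen A ≤ 1 := pow_le_one₀ ht0 ht1
  have h2 : (1 - t) ^ fullLen A' ≤ 1 := pow_le_one₀ (by linarith) (by linarith)
  have h3 : ‖t ^ fullLen A * (1 - t) ^ fullLen A'‖ ≤ 1 := by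
    rw [Real.norm_eq_abs, abs_mul, abs_pow, abs_pow, abs_of_nonneg ht0,
      abs_of_nonneg (by linarith : (0:ℝ) ≤ 1 - t)]
    have h4 : (0:ℝ) ≤ t ^ fullLen A := pow_nonneg ht0 _
    have h5 : (0:ℝ) ≤ (1 - t) ^ fullLen A' := pow_nonneg (by linarith) _
    nlinarith
  exact mul_le_of_le_one_left (norm_nonneg _) h3

lemma main_est {n : ℕ} [NeZero n] (lam : ℝ → ℝ) (hpos : ∀ r, 0 < lam r)
    {C₁ : ℝ} (hC₁ : 1 ≤ C₁)
    (hcomp : ∀ r r' : ℝ, |r - r'| ≤ 1 → lam r ≤ C₁ * lam r' ∧ lam r' ≤ C₁ * lam r)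
    {t : ℝ} (ht0 : 0 ≤ t) (ht1 : t ≤ 1)
    (a : Vec n → Vec n → ℂ) (hF : ContDiff ℝ (⊤ : ℕ∞) (unc2 a))
    (A B A' : Fin n → ℕ) (j k : ℤ) (q p q' : Vec n)
    (hq : |q 0 - (j : ℝ)| ≤ 1) (hq' : |q' 0 - (k : ℝ)| ≤ 1) (e : ℝ) :
    jbr (lamT lam t j k) p ^ e *
      (lamT lam t j k ^ ((angLen B : ℤ) - (angLen A : ℤ) - (angLen A' : ℤ)) *
        ‖d1B A (d2B B (d3B A' (fun q p q' => a (t • q + (1 - t) • q') p))) q p q'‖)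
    ≤ C₁ ^ (|e| + |(((angLen B : ℤ) - (angLen A : ℤ) - (angLen A' : ℤ) : ℤ) : ℝ)|) *
      (jbr (lam ((t • q + (1 - t) • q') 0)) p ^ e *
        (lam ((t • q + (1 - t) • q') 0) ^
            ((angLen B : ℤ) - (angLen A : ℤ) - (angLen A' : ℤ)) *
          ‖dqS (fun i => A i + A' i) (dpS B a) (t • q + (1 - t) • q') p‖)) := by
  have hC₁0 : (0:ℝ) < C₁ := lt_of_lt_of_le one_pos hC₁
  set z : Vec n := t • q + (1 - t) • q' with hz
  set E : ℤ := (angLen B : ℤ) - (angLen A : ℤ) - (angLen A' : ℤ) with hE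
  have hz0 : z 0 = t * q 0 + (1 - t) * q' 0 := rfl
  have hμT : 0 < lamT lam t j k := hpos _
  have hμz : 0 < lam (z 0) := hpos _
  have hdist : |z 0 - (t * (j:ℝ) + (1 - t) * (k:ℝ))| ≤ 1 := by
    rw [hz0]
    have e1 : t * q 0 + (1 - t) * q' 0 - (t * (j:ℝ) + (1 - t) * (k:ℝ))
        = t * (q 0 - j) + (1 - t) * (q' 0 - k) := by ring
    rw [e1]
    calc |t * (q 0 - j) + (1 - t) * (q' 0 - k)|
        ≤ |t * (q 0 - j)| + |(1 - t) * (q' 0 - k)| := abs_add_le _ _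
    _ = t * |q 0 - j| + (1 - t) * |q' 0 - k| := by
        rw [abs_mul, abs_mul, abs_of_nonneg ht0, abs_of_nonneg (by linarith : (0:ℝ) ≤ 1 - t)]
    _ ≤ t * 1 + (1 - t) * 1 := by
        apply add_le_add
        · exact mul_le_mul_of_nonneg_left hq ht0
        · exact mul_le_mul_of_nonneg_left hq' (by linarith)
    _ = 1 := by ring
  have hzc := hcomp (z 0) (t * (j:ℝ) + (1 - t) * (k:ℝ)) hdist
  have h1 : lam (z 0) ≤ C₁ * lamT lam t j k := hzc.1
  have h2 : lamT lam t j k ≤ C₁ * lam (z 0) := hzc.2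
  have hj1 : jbr (lamT lam t j k) p ≤ C₁ * jbr (lam (z 0)) p := jbr_le hμz hμT hC₁ h1 p
  have hj2 : jbr (lam (z 0)) p ≤ C₁ * jbr (lamT lam t j k) p := jbr_le hμT hμz hC₁ h2 p
  have hr : jbr (lamT lam t j k) p ^ e ≤ C₁ ^ |e| * jbr (lam (z 0)) p ^ e :=
    rpow_ratio hC₁ (jbr_pos _ _) (jbr_pos _ _) hj1 hj2 e
  have hzp : lamT lam t j k ^ E ≤ C₁ ^ |(E:ℝ)| * lam (z 0) ^ E :=
    zpow_ratio hC₁ hμT hμz h2 h1 E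
  have hnorm := norm_d1d2d3_le a hF ht0 ht1 A B A' q p q'
  set N : ℝ := ‖dqS (fun i => A i + A' i) (dpS B a) z p‖ with hN
  set N₁ : ℝ := ‖d1B A (d2B B (d3B A' (fun q p q' => a (t • q + (1 - t) • q') p))) q p q'‖
    with hN₁
  have hNnn : 0 ≤ N := norm_nonneg _
  have hN₁nn : 0 ≤ N₁ := norm_nonneg _
  have hjTnn : 0 ≤ jbr (lamT lam t j k) p ^ e := Real.rpow_nonneg (jbr_nonneg _ _) _
  have hjznn : 0 ≤ jbr (lam (z 0)) p ^ e := Real.rpow_nonneg (jbr_nonneg _ _) _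
  have hlznn : (0:ℝ) ≤ lam (z 0) ^ E := zpow_nonneg hμz.le _
  have hlTnn : (0:ℝ) ≤ lamT lam t j k ^ E := zpow_nonneg hμT.le _
  calc jbr (lamT lam t j k) p ^ e * (lamT lam t j k ^ E * N₁)
      ≤ jbr (lamT lam t j k) p ^ e * (lamT lam t j k ^ E * N) := by
        apply mul_le_mul_of_nonneg_left (mul_le_mul_of_nonneg_left hnorm hlTnn) hjTnn
  _ ≤ jbr (lamT lam t j k) p ^ e * ((C₁ ^ |(E:ℝ)| * lam (z 0) ^ E) * N) := by
        apply mul_le_mul_of_nonneg_left (mul_le_mul_of_nonneg_right hzp hNnn) hjTnn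
  _ ≤ (C₁ ^ |e| * jbr (lam (z 0)) p ^ e) * ((C₁ ^ |(E:ℝ)| * lam (z 0) ^ E) * N) := by
        apply mul_le_mul_of_nonneg_right hr
        exact mul_nonneg (mul_nonneg (Real.rpow_nonneg hC₁0.le _) hlznn) hNnn
  _ = C₁ ^ (|e| + |(E:ℝ)|) * (jbr (lam (z 0)) p ^ e * (lam (z 0) ^ E * N)) := by
        rw [Real.rpow_add hC₁0]
        ring

end SymbolAux
end Aux5

noncomputable section Aux6
namespace SymbolAux

lemma lamT_compare (lam : ℝ → ℝ) {C₁ : ℝ}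
    (hcomp : ∀ r r' : ℝ, |r - r'| ≤ 1 → lam r ≤ C₁ * lam r' ∧ lam r' ≤ C₁ * lam r)
    {t : ℝ} (ht0 : 0 ≤ t) (ht1 : t ≤ 1) (j k : ℤ) {r r' : ℝ}
    (hq : |r - (j : ℝ)| ≤ 1) (hq' : |r' - (k : ℝ)| ≤ 1) :
    lam (t * r + (1 - t) * r') ≤ C₁ * lamT lam t j k ∧
      lamT lam t j k ≤ C₁ * lam (t * r + (1 - t) * r') := by
  have hdist : |t * r + (1 - t) * r' - (t * (j:ℝ) + (1 - t) * (k:ℝ))| ≤ 1 := by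
    have e1 : t * r + (1 - t) * r' - (t * (j:ℝ) + (1 - t) * (k:ℝ))
        = t * (r - j) + (1 - t) * (r' - k) := by ring
    rw [e1]
    calc |t * (r - j) + (1 - t) * (r' - k)|
        ≤ |t * (r - j)| + |(1 - t) * (r' - k)| := abs_add_le _ _
    _ = t * |r - j| + (1 - t) * |r' - k| := by
        rw [abs_mul, abs_mul, abs_of_nonneg ht0, abs_of_nonneg (by linarith : (0:ℝ) ≤ 1 - t)]
    _ ≤ t * 1 + (1 - t) * 1 := add_le_add
        (mul_le_mul_of_nonneg_left hq ht0) (mul_le_mul_of_nonneg_left hq' (by linarith))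
    _ = 1 := by ring
  exact hcomp _ _ hdist

end SymbolAux
end Aux6

/-- **Proposition 2.2.**  Let `λ` satisfy the admissibility condition.  For any integer
`M ≥ 0` and any `t ∈ [0,1]` there is a constant `C_{Mt} > 0` such that for every symbol
`a ∈ S^m_σ(λ)`, the function `a_t(q,p,q') := a(tq + (1-t)q', p)` belongs to the bisymbol
class `BS^m_σ(λ;t)` and `|a_t|_{λ:M,m,σ,t} ≤ C_{Mt} |a|_{λ:M,m,σ}`. -/
theorem symbol_to_bisymbol
    (n : ℕ) [NeZero n] (lam : ℝ → ℝ) (hlam : Admissible lam)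
    (m σ : ℝ) (hσ : σ ∈ Set.Icc (0 : ℝ) 1)
    (M : ℕ) (t : ℝ) (ht : t ∈ Set.Icc (0 : ℝ) 1) :
    ∃ C > 0, ∀ a : Vec n → Vec n → ℂ, IsSymbol lam m σ a →
      IsBisymbol lam m σ t (fun q p q' => a (t • q + (1 - t) • q') p) ∧
      bisymSeminorm lam M m σ t (fun q p q' => a (t • q + (1 - t) • q') p)
        ≤ C * symSeminorm lam M m σ a := by
  classical
  obtain ⟨hpos, C₀, hC₀pos, hadm⟩ := hlam
  obtain ⟨hσ0, hσ1⟩ := hσ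
  obtain ⟨ht0, ht1⟩ := ht
  set C₁ : ℝ := max C₀ 1 with hC₁def
  have hC₁ : 1 ≤ C₁ := le_max_right _ _
  have hC₁0 : (0:ℝ) < C₁ := lt_of_lt_of_le one_pos hC₁
  have hcomp : ∀ r r' : ℝ, |r - r'| ≤ 1 → lam r ≤ C₁ * lam r' ∧ lam r' ≤ C₁ * lam r := by
    intro r r' h
    obtain ⟨h1, h2⟩ := hadm r r' h
    have hr := hpos r; have hr' := hpos r'
    constructor
    · have h3 : lam r ≤ C₀ * lam r' := by
        rw [div_le_iff₀ hr'] at h2; linarith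
      calc lam r ≤ C₀ * lam r' := h3
      _ ≤ C₁ * lam r' := mul_le_mul_of_nonneg_right (le_max_left _ _) hr'.le
    · have h4 : C₀⁻¹ * lam r' ≤ lam r := by
        rw [le_div_iff₀ hr'] at h1; linarith
      have h5 : lam r' ≤ C₀ * lam r := by
        have h6 := mul_le_mul_of_nonneg_left h4 hC₀pos.le
        rwa [← mul_assoc, mul_inv_cancel₀ (ne_of_gt hC₀pos), one_mul] at h6
      calc lam r' ≤ C₀ * lam r := h5
      _ ≤ C₁ * lam r := mul_le_mul_of_nonneg_right (le_max_left _ _) hr.le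
  set Kmax : ℝ := C₁ ^ (|m| + 2 * (M:ℝ)) with hKmaxdef
  have hKmax0 : (0:ℝ) < Kmax := Real.rpow_pos_of_pos hC₁0 _
  set Ncard : ℕ := Fintype.card (Fin n → Fin (M+1)) with hNcard
  have hNc : 0 < Ncard := Fintype.card_pos
  refine ⟨(Ncard:ℝ)^3 * Kmax, by positivity, ?_⟩
  rintro a ⟨hsm, hbd⟩
  have hF : ContDiff ℝ (⊤ : ℕ∞) (SymbolAux.unc2 a) := hsm
  have hsymnn : 0 ≤ symSeminorm lam M m σ a := by
    apply Finset.sum_nonneg; intro A _; apply Finset.sum_nonneg; intro B _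
    split
    · apply Real.iSup_nonneg; intro q; apply Real.iSup_nonneg; intro p
      exact mul_nonneg (Real.rpow_nonneg (SymbolAux.jbr_nonneg _ _) _)
        (mul_nonneg (zpow_nonneg (hpos _).le _) (norm_nonneg _))
    · exact le_rfl
  constructor
  · -- membership in the bisymbol class
    constructor
    · show ContDiff ℝ (⊤ : ℕ∞) (SymbolAux.unc3 (fun q p q' => a (t • q + (1 - t) • q') p))
      rw [SymbolAux.unc3_subst]
      exact hF.comp (SymbolAux.Tt n t).contDiff
    · intro A B A'
      obtain ⟨Cs, hCs0, hCsb⟩ := hbd (fun i => A i + A' i) B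
      refine ⟨C₁ ^ |((((angLen B : ℤ) - (angLen A : ℤ) - (angLen A' : ℤ)) : ℤ) : ℝ)| *
        (Cs * C₁ ^ |m - σ * (fullLen B : ℝ)|), by positivity, ?_⟩
      intro j k q p q' hq hq'
      have h0 := SymbolAux.main_est lam hpos hC₁ hcomp ht0 ht1 a hF A B A' j k q p q' hq hq'
        (0 : ℝ)
      rw [Real.rpow_zero, Real.rpow_zero, abs_zero, zero_add, one_mul, one_mul] at h0
      set z : Vec n := t • q + (1 - t) • q' with hzdef
      set E : ℤ := (angLen B : ℤ) - (angLen A : ℤ) - (angLen A' : ℤ) with hEdef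
      have hμT : 0 < lamT lam t j k := hpos _
      have hμz : 0 < lam (z 0) := hpos _
      have hzc : lam (z 0) ≤ C₁ * lamT lam t j k ∧ lamT lam t j k ≤ C₁ * lam (z 0) :=
        SymbolAux.lamT_compare lam hcomp ht0 ht1 j k hq hq'
      have hj1 : jbr (lamT lam t j k) p ≤ C₁ * jbr (lam (z 0)) p :=
        SymbolAux.jbr_le hμz hμT hC₁ hzc.1 p
      have hj2 : jbr (lam (z 0)) p ≤ C₁ * jbr (lamT lam t j k) p :=
        SymbolAux.jbr_le hμT hμz hC₁ hzc.2 p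
      have hjr : jbr (lam (z 0)) p ^ (m - σ * (fullLen B : ℝ))
          ≤ C₁ ^ |m - σ * (fullLen B : ℝ)| * jbr (lamT lam t j k) p ^ (m - σ * (fullLen B : ℝ)) :=
        SymbolAux.rpow_ratio hC₁ (SymbolAux.jbr_pos _ _) (SymbolAux.jbr_pos _ _) hj2 hj1 _
      have hs := hCsb z p
      have hang : ((angLen B : ℤ) - (angLen (fun i => A i + A' i) : ℤ)) = E := by
        rw [SymbolAux.angLen_add, hEdef]; push_cast; ring
      rw [hang] at hs
      have hnn1 : (0:ℝ) ≤ C₁ ^ |((E : ℤ) : ℝ)| := (Real.rpow_pos_of_pos hC₁0 _).le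
      calc lamT lam t j k ^ E *
            ‖d1B A (d2B B (d3B A' (fun q p q' => a (t • q + (1 - t) • q') p))) q p q'‖
          ≤ C₁ ^ |((E : ℤ) : ℝ)| * (lam (z 0) ^ E *
              ‖dqS (fun i => A i + A' i) (dpS B a) z p‖) := h0
      _ ≤ C₁ ^ |((E : ℤ) : ℝ)| * (Cs * jbr (lam (z 0)) p ^ (m - σ * (fullLen B : ℝ))) :=
            mul_le_mul_of_nonneg_left hs hnn1
      _ ≤ C₁ ^ |((E : ℤ) : ℝ)| * (Cs * (C₁ ^ |m - σ * (fullLen B : ℝ)| *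
              jbr (lamT lam t j k) p ^ (m - σ * (fullLen B : ℝ)))) := by
            apply mul_le_mul_of_nonneg_left _ hnn1
            exact mul_le_mul_of_nonneg_left hjr hCs0.le
      _ = C₁ ^ |((E : ℤ) : ℝ)| * (Cs * C₁ ^ |m - σ * (fullLen B : ℝ)|) *
            jbr (lamT lam t j k) p ^ (m - σ * (fullLen B : ℝ)) := by ring
  · -- the seminorm estimate
    have hterm : ∀ A B A' : Fin n → Fin (M+1),
        (if fullLen (fun i => (A i : ℕ)) + fullLen (fun i => (B i : ℕ))
            + fullLen (fun i => (A' i : ℕ)) ≤ M then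
          ⨆ j : ℤ, ⨆ k : ℤ, ⨆ q : Vec n, ⨆ p : Vec n, ⨆ q' : Vec n,
            if |q 0 - (j : ℝ)| ≤ 1 ∧ |q' 0 - (k : ℝ)| ≤ 1 then
              jbr (lamT lam t j k) p ^ (-m + σ * (fullLen (fun i => (B i : ℕ)) : ℝ)) *
                (lamT lam t j k ^ ((angLen (fun i => (B i : ℕ)) : ℤ)
                    - (angLen (fun i => (A i : ℕ)) : ℤ) - (angLen (fun i => (A' i : ℕ)) : ℤ)) *
                  ‖d1B (fun i => (A i : ℕ)) (d2B (fun i => (B i : ℕ))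
                      (d3B (fun i => (A' i : ℕ))
                        (fun q p q' => a (t • q + (1 - t) • q') p))) q p q'‖)
            else 0
        else 0) ≤ Kmax * symSeminorm lam M m σ a := by
      intro A B A'
      split
      case isFalse => exact mul_nonneg hKmax0.le hsymnn
      case isTrue hcond =>
        have hlt : ∀ i : Fin n, (A i : ℕ) + (A' i : ℕ) < M + 1 := by
          intro i
          have h1 := SymbolAux.comp_le_fullLen (fun i => (A i : ℕ)) i
          have h2 := SymbolAux.comp_le_fullLen (fun i => (A' i : ℕ)) i
          omega
        set Atil : Fin n → Fin (M+1) := fun i => ⟨(A i : ℕ) + (A' i : ℕ), hlt i⟩ with hAtil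
        obtain ⟨Cs, hCs0, hCsb⟩ := hbd (fun i => (Atil i : ℕ)) (fun i => (B i : ℕ))
        set g : Vec n → Vec n → ℝ := fun q p =>
          jbr (lam (q 0)) p ^ (-m + σ * (fullLen (fun i => (B i : ℕ)) : ℝ)) *
            (lam (q 0) ^ ((angLen (fun i => (B i : ℕ)) : ℤ)
                - (angLen (fun i => (Atil i : ℕ)) : ℤ)) *
              ‖dqS (fun i => (Atil i : ℕ)) (dpS (fun i => (B i : ℕ)) a) q p‖) with hgdef
        have hgnn : ∀ z w : Vec n, 0 ≤ g z w := fun z w =>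
          mul_nonneg (Real.rpow_nonneg (SymbolAux.jbr_nonneg _ _) _)
            (mul_nonneg (zpow_nonneg (hpos _).le _) (norm_nonneg _))
        have hgbd : ∀ z w : Vec n, g z w ≤ Cs := by
          intro z w
          have h := hCsb z w
          have hjnn : (0:ℝ) ≤ jbr (lam (z 0)) w ^ (-m + σ * (fullLen (fun i => (B i : ℕ)) : ℝ)) :=
            Real.rpow_nonneg (SymbolAux.jbr_nonneg _ _) _
          calc g z w ≤ jbr (lam (z 0)) w ^ (-m + σ * (fullLen (fun i => (B i : ℕ)) : ℝ)) *
                (Cs * jbr (lam (z 0)) w ^ (m - σ * (fullLen (fun i => (B i : ℕ)) : ℝ))) :=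
              mul_le_mul_of_nonneg_left h hjnn
          _ = Cs * (jbr (lam (z 0)) w ^ (-m + σ * (fullLen (fun i => (B i : ℕ)) : ℝ)) *
                jbr (lam (z 0)) w ^ (m - σ * (fullLen (fun i => (B i : ℕ)) : ℝ))) := by
              rw [mul_left_comm]
          _ = Cs := by
              rw [← Real.rpow_add (SymbolAux.jbr_pos (lam (z 0)) w),
                show (-m + σ * (fullLen (fun i => (B i : ℕ)) : ℝ))
                  + (m - σ * (fullLen (fun i => (B i : ℕ)) : ℝ)) = 0 by ring,
                Real.rpow_zero, mul_one]
        have hb1 : ∀ z : Vec n, BddAbove (Set.range (g z)) := fun z =>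
          ⟨Cs, by rintro _ ⟨w, rfl⟩; exact hgbd z w⟩
        have hb2 : BddAbove (Set.range (fun z : Vec n => ⨆ w : Vec n, g z w)) :=
          ⟨Cs, by rintro _ ⟨z, rfl⟩; exact ciSup_le (hgbd z)⟩
        have hle_sup : ∀ z w : Vec n, g z w ≤ ⨆ z : Vec n, ⨆ w : Vec n, g z w := fun z w =>
          le_trans (le_ciSup (hb1 z) w) (le_ciSup hb2 z)
        have hsym_ge : (⨆ z : Vec n, ⨆ w : Vec n, g z w) ≤ symSeminorm lam M m σ a := by
          have hcond2 : fullLen (fun i => (Atil i : ℕ)) + fullLen (fun i => (B i : ℕ)) ≤ M := by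
            have e1 : fullLen (fun i => (Atil i : ℕ))
                = fullLen (fun i => (A i : ℕ)) + fullLen (fun i => (A' i : ℕ)) := by
              have e0 : (fun i => (Atil i : ℕ)) = fun i => (A i : ℕ) + (A' i : ℕ) := rfl
              rw [e0, SymbolAux.fullLen_add]
            omega
          unfold symSeminorm
          have hnn : ∀ AA BB : Fin n → Fin (M+1),
              (0:ℝ) ≤ if fullLen (fun i => (AA i : ℕ)) + fullLen (fun i => (BB i : ℕ)) ≤ M then
                ⨆ q : Vec n, ⨆ p : Vec n,
                  jbr (lam (q 0)) p ^ (-m + σ * (fullLen (fun i => (BB i : ℕ)) : ℝ)) *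
                    (lam (q 0) ^ ((angLen (fun i => (BB i : ℕ)) : ℤ)
                        - (angLen (fun i => (AA i : ℕ)) : ℤ)) *
                      ‖dqS (fun i => (AA i : ℕ)) (dpS (fun i => (BB i : ℕ)) a) q p‖)
              else 0 := by
            intro AA BB
            split
            · apply Real.iSup_nonneg; intro q; apply Real.iSup_nonneg; intro p
              exact mul_nonneg (Real.rpow_nonneg (SymbolAux.jbr_nonneg _ _) _)
                (mul_nonneg (zpow_nonneg (hpos _).le _) (norm_nonneg _))
            · exact le_rfl
          refine le_trans ?_ (Finset.single_le_sum
            (fun AA _ => Finset.sum_nonneg (fun BB _ => hnn AA BB)) (Finset.mem_univ Atil))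
          refine le_trans ?_ (Finset.single_le_sum (fun BB _ => hnn Atil BB) (Finset.mem_univ B))
          rw [if_pos hcond2]
        refine ciSup_le fun j => ciSup_le fun k => ciSup_le fun q => ciSup_le fun p =>
          ciSup_le fun q' => ?_
        split
        case isTrue hc =>
          have h0 := SymbolAux.main_est lam hpos hC₁ hcomp ht0 ht1 a hF
            (fun i => (A i : ℕ)) (fun i => (B i : ℕ)) (fun i => (A' i : ℕ)) j k q p q'
            hc.1 hc.2 (-m + σ * (fullLen (fun i => (B i : ℕ)) : ℝ))
          have hEang : (angLen (fun i => (B i : ℕ)) : ℤ) - (angLen (fun i => (Atil i : ℕ)) : ℤ)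
              = (angLen (fun i => (B i : ℕ)) : ℤ) - (angLen (fun i => (A i : ℕ)) : ℤ)
                - (angLen (fun i => (A' i : ℕ)) : ℤ) := by
            have e0 : (fun i => (Atil i : ℕ)) = fun i => (A i : ℕ) + (A' i : ℕ) := rfl
            rw [e0, SymbolAux.angLen_add]
            push_cast; ring
          have hgz : g (t • q + (1 - t) • q') p
              = jbr (lam ((t • q + (1 - t) • q') 0)) p
                  ^ (-m + σ * (fullLen (fun i => (B i : ℕ)) : ℝ)) *
                (lam ((t • q + (1 - t) • q') 0) ^ ((angLen (fun i => (B i : ℕ)) : ℤ)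
                    - (angLen (fun i => (A i : ℕ)) : ℤ) - (angLen (fun i => (A' i : ℕ)) : ℤ)) *
                  ‖dqS (fun i => (A i : ℕ) + (A' i : ℕ))
                    (dpS (fun i => (B i : ℕ)) a) (t • q + (1 - t) • q') p‖) := by
            simp only [hgdef]
            rw [hEang]
          rw [← hgz] at h0
          have hfB : fullLen (fun i => (B i : ℕ)) ≤ M := by omega
          have hexp : |(-m + σ * (fullLen (fun i => (B i : ℕ)) : ℝ))|
              + |((((angLen (fun i => (B i : ℕ)) : ℤ) - (angLen (fun i => (A i : ℕ)) : ℤ)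
                  - (angLen (fun i => (A' i : ℕ)) : ℤ)) : ℤ) : ℝ)| ≤ |m| + 2 * (M:ℝ) := by
            have hfBr : σ * (fullLen (fun i => (B i : ℕ)) : ℝ) ≤ (M:ℝ) := by
              have h1 : σ * (fullLen (fun i => (B i : ℕ)) : ℝ)
                  ≤ 1 * (fullLen (fun i => (B i : ℕ)) : ℝ) :=
                mul_le_mul_of_nonneg_right hσ1 (Nat.cast_nonneg _)
              have h2 : ((fullLen (fun i => (B i : ℕ)) : ℕ) : ℝ) ≤ (M:ℝ) := Nat.cast_le.mpr hfB
              linarith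
            have hfBnn : (0:ℝ) ≤ σ * (fullLen (fun i => (B i : ℕ)) : ℝ) :=
              mul_nonneg hσ0 (Nat.cast_nonneg _)
            have habs1 : |(-m + σ * (fullLen (fun i => (B i : ℕ)) : ℝ))| ≤ |m| + (M:ℝ) := by
              calc |(-m + σ * (fullLen (fun i => (B i : ℕ)) : ℝ))|
                  ≤ |(-m)| + |σ * (fullLen (fun i => (B i : ℕ)) : ℝ)| := abs_add_le _ _
              _ = |m| + σ * (fullLen (fun i => (B i : ℕ)) : ℝ) := by
                  rw [abs_neg, abs_of_nonneg hfBnn]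
              _ ≤ |m| + (M:ℝ) := by linarith
            have hEabs : |((angLen (fun i => (B i : ℕ)) : ℤ) - (angLen (fun i => (A i : ℕ)) : ℤ)
                - (angLen (fun i => (A' i : ℕ)) : ℤ))| ≤ (M:ℤ) := by
              have ha1 := SymbolAux.angLen_le_fullLen (fun i => (A i : ℕ))
              have ha2 := SymbolAux.angLen_le_fullLen (fun i => (B i : ℕ))
              have ha3 := SymbolAux.angLen_le_fullLen (fun i => (A' i : ℕ))
              rw [abs_le]
              omega
            have hEabs' : |((((angLen (fun i => (B i : ℕ)) : ℤ)
                - (angLen (fun i => (A i : ℕ)) : ℤ)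
                - (angLen (fun i => (A' i : ℕ)) : ℤ)) : ℤ) : ℝ)| ≤ (M:ℝ) := by
              rw [← Int.cast_abs]
              exact_mod_cast hEabs
            linarith
          have hK : C₁ ^ (|(-m + σ * (fullLen (fun i => (B i : ℕ)) : ℝ))|
              + |((((angLen (fun i => (B i : ℕ)) : ℤ) - (angLen (fun i => (A i : ℕ)) : ℤ)
                  - (angLen (fun i => (A' i : ℕ)) : ℤ)) : ℤ) : ℝ)|) ≤ Kmax := by
            rw [hKmaxdef]
            exact Real.rpow_le_rpow_of_exponent_le hC₁ hexp
          calc jbr (lamT lam t j k) p ^ (-m + σ * (fullLen (fun i => (B i : ℕ)) : ℝ)) *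
                (lamT lam t j k ^ ((angLen (fun i => (B i : ℕ)) : ℤ)
                    - (angLen (fun i => (A i : ℕ)) : ℤ) - (angLen (fun i => (A' i : ℕ)) : ℤ)) *
                  ‖d1B (fun i => (A i : ℕ)) (d2B (fun i => (B i : ℕ))
                      (d3B (fun i => (A' i : ℕ))
                        (fun q p q' => a (t • q + (1 - t) • q') p))) q p q'‖)
              ≤ C₁ ^ (|(-m + σ * (fullLen (fun i => (B i : ℕ)) : ℝ))|
                + |((((angLen (fun i => (B i : ℕ)) : ℤ) - (angLen (fun i => (A i : ℕ)) : ℤ)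
                    - (angLen (fun i => (A' i : ℕ)) : ℤ)) : ℤ) : ℝ)|) *
                g (t • q + (1 - t) • q') p := h0
          _ ≤ Kmax * g (t • q + (1 - t) • q') p :=
              mul_le_mul_of_nonneg_right hK (hgnn _ _)
          _ ≤ Kmax * (⨆ z : Vec n, ⨆ w : Vec n, g z w) :=
              mul_le_mul_of_nonneg_left (hle_sup _ _) hKmax0.le
          _ ≤ Kmax * symSeminorm lam M m σ a :=
              mul_le_mul_of_nonneg_left hsym_ge hKmax0.le
        case isFalse => exact mul_nonneg hKmax0.le hsymnn
    unfold bisymSeminorm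
    refine le_trans (Finset.sum_le_sum fun A _ => Finset.sum_le_sum fun B _ =>
      Finset.sum_le_sum fun A' _ => hterm A B A') ?_
    apply le_of_eq
    simp only [Finset.sum_const, Finset.card_univ, nsmul_eq_mul]
    rw [← hNcard]
    ring
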